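/- arXiv:1303.5884 — 2 statements merged into one kernel-verified Lean document; each statement's English description precedes it below -/
import Mathlib

section
/- Let u : (a,b) → ℝ be continuous and nonnegative, and suppose u satisfies u'' ≤ u in the support sense (for every t₀ and ε > 0 there is a C² support function φ ≥ u near t₀ with φ(t₀) = u(t₀) and φ''(t₀) ≤ u(t₀) + ε). Then for any μ : (a,b) → ℝ that is C² with μ'' ≤ −2 and |μ| < 1/10, and any ε ∈ (0,1), the function u + ε·μ restricted to the set where u < ε satisfies (u+εμ)'' ≤ −ε in the support sense. -/
/-!
Support functions can be added, and multiplied by positive constants. A C² function `f` is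
supported at `t₀` by its osculating parabola with curvature raised from `f''(t₀)` to any `k`
above it: the difference is convex near `t₀` and has a critical point there. Hence `u + εμ` has
the support bound `u + εμ'' ≤ u - 2ε`, which is at most `-ε` where `u < ε`.
-/

/-- `u'' ≤ g` on `s` in the support (barrier) sense: at every `t₀ ∈ s` and every
`ε > 0` there is a C² function `φ ≥ u` near `t₀` with `φ t₀ = u t₀` and
`φ'' t₀ ≤ g t₀ + ε`. -/
def SecondDerivLESupport (s : Set ℝ) (u g : ℝ → ℝ) : Prop :=
  ∀ t₀ ∈ s, ∀ ε > 0, ∃ φ : ℝ → ℝ,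
    ContDiff ℝ 2 φ ∧ φ t₀ = u t₀ ∧ (∀ᶠ t in nhds t₀, u t ≤ φ t) ∧
      deriv (deriv φ) t₀ ≤ g t₀ + ε

open Topology

namespace SecondDerivLESupport

variable {s : Set ℝ} {u v g h : ℝ → ℝ}

theorem mono {s' : Set ℝ} {g' : ℝ → ℝ} (hu : SecondDerivLESupport s u g) (hs : s' ⊆ s)
    (hg : ∀ t ∈ s', g t ≤ g' t) : SecondDerivLESupport s' u g' := by
  intro t₀ ht₀ δ hδ
  obtain ⟨φ, hφ, hφt₀, hφu, hφ''⟩ := hu t₀ (hs ht₀) δ hδ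
  exact ⟨φ, hφ, hφt₀, hφu, by linarith [hg t₀ ht₀]⟩

theorem add (hu : SecondDerivLESupport s u g) (hv : SecondDerivLESupport s v h) :
    SecondDerivLESupport s (fun t => u t + v t) (fun t => g t + h t) := by
  intro t₀ ht₀ δ hδ
  obtain ⟨φ, hφ, hφt₀, hφu, hφ''⟩ := hu t₀ ht₀ (δ / 2) (half_pos hδ)
  obtain ⟨ψ, hψ, hψt₀, hψv, hψ''⟩ := hv t₀ ht₀ (δ / 2) (half_pos hδ)
  have hsum'' :
      deriv (deriv fun t => φ t + ψ t) t₀ = deriv (deriv φ) t₀ + deriv (deriv ψ) t₀ := by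
    simpa [iteratedDeriv_eq_iterate] using
      iteratedDeriv_fun_add (x := t₀) hφ.contDiffAt hψ.contDiffAt
  refine ⟨fun t => φ t + ψ t, hφ.add hψ, by simp only [hφt₀, hψt₀], ?_, ?_⟩
  · filter_upwards [hφu, hψv] with t hut hvt using add_le_add hut hvt
  · rw [hsum'']
    linarith

theorem const_mul {c : ℝ} (hu : SecondDerivLESupport s u g) (hc : 0 < c) :
    SecondDerivLESupport s (fun t => c * u t) (fun t => c * g t) := by
  intro t₀ ht₀ δ hδ
  obtain ⟨φ, hφ, hφt₀, hφu, hφ''⟩ := hu t₀ ht₀ (δ / c) (div_pos hδ hc)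
  refine ⟨fun t => c * φ t, contDiff_const.mul hφ, by simp only [hφt₀], ?_, ?_⟩
  · filter_upwards [hφu] with t ht using mul_le_mul_of_nonneg_left ht hc.le
  · simp only [deriv_const_mul_field']
    calc c * deriv (deriv φ) t₀
        ≤ c * (g t₀ + δ / c) := mul_le_mul_of_nonneg_left hφ'' hc.le
      _ = c * g t₀ + δ := by field_simp

end SecondDerivLESupport

theorem hasDerivAt_quadratic (a b k t₀ t : ℝ) :
    HasDerivAt (fun t => a + b * (t - t₀) + k / 2 * (t - t₀) ^ 2) (b + k * (t - t₀)) t := by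
  have h := (hasDerivAt_id t).sub_const t₀
  exact (((h.const_mul b).const_add a).add ((h.pow 2).const_mul (k / 2))).congr_deriv
    (by simp only [id_eq, mul_one, Nat.cast_ofNat, Nat.add_one_sub_one, pow_one]; ring)

theorem hasDerivAt_affine (b k t₀ t : ℝ) : HasDerivAt (fun t => b + k * (t - t₀)) k t := by
  simpa using ((hasDerivAt_id t).sub_const t₀).const_mul k |>.const_add b

theorem deriv_deriv_quadratic (a b k t₀ x : ℝ) :
    deriv (deriv fun t => a + b * (t - t₀) + k / 2 * (t - t₀) ^ 2) x = k := by
  rw [funext fun t => (hasDerivAt_quadratic a b k t₀ t).deriv]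
  exact (hasDerivAt_affine b k t₀ x).deriv

theorem isMinOn_of_hasDerivAt_eq_zero_of_deriv2_nonneg {D : Set ℝ} {g g' g'' : ℝ → ℝ}
    {t₀ : ℝ} (hD : IsOpen D) (hDc : Convex ℝ D) (ht₀ : t₀ ∈ D)
    (hg : ∀ t ∈ D, HasDerivAt g (g' t) t) (hg' : ∀ t ∈ D, HasDerivAt g' (g'' t) t)
    (hg'' : ∀ t ∈ D, 0 ≤ g'' t) (hcrit : g' t₀ = 0) : IsMinOn g D t₀ := by
  have hconv : ConvexOn ℝ D g := by
    refine convexOn_of_hasDerivWithinAt2_nonneg (f' := g') (f'' := g'') hDc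
      (fun t ht => (hg t ht).continuousAt.continuousWithinAt) ?_ ?_ ?_ <;>
      rw [hD.interior_eq]
    · exact fun t ht => (hg t ht).hasDerivWithinAt
    · exact fun t ht => (hg' t ht).hasDerivWithinAt
    · exact hg''
  refine hconv.isMinOn_of_rightDeriv_eq_zero (by rwa [hD.interior_eq]) ?_
  rw [(hg t₀ ht₀).hasDerivWithinAt.derivWithin (uniqueDiffWithinAt_Ioi t₀), hcrit]

theorem eventually_le_quadratic_of_contDiffOn {f : ℝ → ℝ} {s : Set ℝ} {t₀ k : ℝ}
    (hs : IsOpen s) (hf : ContDiffOn ℝ 2 f s) (ht₀ : t₀ ∈ s)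
    (hk : deriv (deriv f) t₀ < k) :
    ∀ᶠ t in 𝓝 t₀, f t ≤ f t₀ + deriv f t₀ * (t - t₀) + k / 2 * (t - t₀) ^ 2 := by
  have hf' : ContDiffOn ℝ 1 (deriv f) s := hf.deriv_of_isOpen hs (by norm_num)
  have hf'' : ContinuousAt (deriv (deriv f)) t₀ :=
    (hf'.deriv_of_isOpen (m := 0) hs (by norm_num)).continuousOn.continuousAt (hs.mem_nhds ht₀)
  obtain ⟨r, hr, hball⟩ :
      ∃ r > 0, Metric.ball t₀ r ⊆ {t | t ∈ s ∧ deriv (deriv f) t < k} :=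
    Metric.mem_nhds_iff.mp ((hs.eventually_mem ht₀).and (hf''.eventually (gt_mem_nhds hk)))
  have hdiff : ∀ t ∈ Metric.ball t₀ r, HasDerivAt f (deriv f t) t ∧
      HasDerivAt (deriv f) (deriv (deriv f) t) t := fun t ht =>
    have hts := hs.mem_nhds (hball ht).1
    ⟨((hf.differentiableOn (by norm_num)) t (hball ht).1).differentiableAt hts |>.hasDerivAt,
      ((hf'.differentiableOn (by norm_num)) t (hball ht).1).differentiableAt hts |>.hasDerivAt⟩
  have hmin := isMinOn_of_hasDerivAt_eq_zero_of_deriv2_nonneg Metric.isOpen_ball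
    (convex_ball t₀ r) (Metric.mem_ball_self hr)
    (g := fun t => f t₀ + deriv f t₀ * (t - t₀) + k / 2 * (t - t₀) ^ 2 - f t)
    (fun t ht => (hasDerivAt_quadratic _ _ k t₀ t).sub (hdiff t ht).1)
    (fun t ht => (hasDerivAt_affine _ k t₀ t).sub (hdiff t ht).2)
    (fun t ht => sub_nonneg.mpr (hball ht).2.le) (by simp)
  filter_upwards [Metric.ball_mem_nhds t₀ hr] with t ht
  simpa using hmin ht

theorem SecondDerivLESupport.of_contDiffOn {f : ℝ → ℝ} {s : Set ℝ} (hs : IsOpen s)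
    (hf : ContDiffOn ℝ 2 f s) : SecondDerivLESupport s f (iteratedDerivWithin 2 f s) := by
  intro t₀ ht₀ δ hδ
  set k := iteratedDerivWithin 2 f s t₀ + δ
  have hk : deriv (deriv f) t₀ < k := by
    simp only [k, iteratedDerivWithin_of_isOpen_eq_iterate hs ht₀, Function.iterate_succ,
      Function.iterate_zero, Function.comp_apply, id_eq]
    linarith
  exact ⟨_, by fun_prop, by simp, eventually_le_quadratic_of_contDiffOn hs hf ht₀ hk,
    (deriv_deriv_quadratic _ _ k t₀ t₀).le⟩

theorem support_ineq_perturbation_general {a b : ℝ} {u μ : ℝ → ℝ}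
    (hu_supp : SecondDerivLESupport (Set.Ioo a b) u u)
    (hμ : ContDiffOn ℝ 2 μ (Set.Ioo a b))
    (hμ'' : ∀ t ∈ Set.Ioo a b, iteratedDerivWithin 2 μ (Set.Ioo a b) t ≤ -2)
    {ε : ℝ} (hε : ε ∈ Set.Ioo (0 : ℝ) 1) :
    SecondDerivLESupport {t ∈ Set.Ioo a b | u t < ε}
      (fun t => u t + ε * μ t) (fun _ => -ε) := by
  have hsum := hu_supp.add ((SecondDerivLESupport.of_contDiffOn isOpen_Ioo hμ).const_mul hε.1)
  refine hsum.mono (Set.sep_subset _ _) ?_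
  rintro t ⟨ht, hut⟩
  have := mul_le_mul_of_nonneg_left (hμ'' t ht) hε.1.le
  linarith

/-- If `u ≥ 0` is continuous on `(a,b)` and satisfies `u'' ≤ u` in the support
sense, `μ` is C² with `μ'' ≤ -2` and `|μ| < 1/10` on `(a,b)`, and `ε ∈ (0,1)`,
then `u + ε μ` satisfies `(u + ε μ)'' ≤ -ε` in the support sense on the set
where `u < ε`. -/
theorem support_ineq_perturbation {a b : ℝ} {u μ : ℝ → ℝ}
    (hu_cont : ContinuousOn u (Set.Ioo a b))
    (hu_nonneg : ∀ t ∈ Set.Ioo a b, 0 ≤ u t)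
    (hu_supp : SecondDerivLESupport (Set.Ioo a b) u u)
    (hμ : ContDiffOn ℝ 2 μ (Set.Ioo a b))
    (hμ'' : ∀ t ∈ Set.Ioo a b, iteratedDerivWithin 2 μ (Set.Ioo a b) t ≤ -2)
    (hμ_small : ∀ t ∈ Set.Ioo a b, |μ t| < 1 / 10)
    {ε : ℝ} (hε : ε ∈ Set.Ioo (0 : ℝ) 1) :
    SecondDerivLESupport {t ∈ Set.Ioo a b | u t < ε}
      (fun t => u t + ε * μ t) (fun _ => -ε) :=
  support_ineq_perturbation_general hu_supp hμ hμ'' hε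
end

section
/- Let Cᵢ be a sequence of compact convex sets in ℝⁿ with nonempty interior converging in Hausdorff distance to a compact convex set C with nonempty interior. Then the boundaries ∂Cᵢ converge to ∂C in Hausdorff distance. -/
/-!
A frontier point `x` of `B` is within `δ = d_H(A, B)` of `frontier A`: if `x ∉ A`, walk along a
segment from `x` to a nearby point of `A`; if `x ∈ A`, a ball of radius `t > δ` around `x` cannot
lie in `A`, since by convexity of `B` its `δ`-shrinking would lie in `B`, making `x` interior to
`B`. Hence `d_H(∂A, ∂B) ≤ d_H(A, B)` for compact convex sets.
-/

open Metric Set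

theorem IsPreconnected.inter_frontier_nonempty {X : Type*} [TopologicalSpace X] {S s : Set X}
    (hS : IsPreconnected S) (hin : (S ∩ s).Nonempty) (hout : (S \ s).Nonempty) :
    (S ∩ frontier s).Nonempty := by
  by_contra hne
  have hcover : S ⊆ interior s ∪ (closure s)ᶜ := fun w hw => by
    by_cases hwi : w ∈ interior s
    · exact Or.inl hwi
    · exact Or.inr fun hwc => hne ⟨w, hw, hwc, hwi⟩
  obtain ⟨x, hxS, hx⟩ := hin
  obtain ⟨z, hzS, hz⟩ := hout
  obtain ⟨w, -, hwi, hwc⟩ := hS _ _ isOpen_interior isClosed_closure.isOpen_compl hcover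
    ⟨x, hxS, (hcover hxS).resolve_right (not_not.2 (subset_closure hx))⟩
    ⟨z, hzS, (hcover hzS).resolve_left fun hzi => hz (interior_subset hzi)⟩
  exact hwc (interior_subset_closure hwi)

section NormedSpace

variable {E : Type*} [NormedAddCommGroup E] [NormedSpace ℝ E]

theorem infDist_frontier_le_infDist_compl {s : Set E} {x : E} (hx : x ∈ s) :
    infDist x (frontier s) ≤ infDist x sᶜ := by
  rcases sᶜ.eq_empty_or_nonempty with hempty | hne
  · rw [compl_empty_iff.1 hempty, frontier_univ, infDist_empty]
    exact infDist_nonneg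
  refine (le_infDist hne).2 fun y hy => ?_
  obtain ⟨w, hw, hwf⟩ := (convex_segment x y).isPreconnected.inter_frontier_nonempty
    ⟨x, left_mem_segment ℝ x y, hx⟩ ⟨y, right_mem_segment ℝ x y, hy⟩
  calc infDist x (frontier s) ≤ dist x w := infDist_le_dist_of_mem hwf
    _ ≤ dist x y := by linarith [dist_add_dist_of_mem_segment hw, dist_nonneg (x := w) (y := y)]

end NormedSpace

section InnerProductSpace

variable {E : Type*} [NormedAddCommGroup E] [InnerProductSpace ℝ E]

/-- The unit vector is the normalized direction from the nearest point of `B` to `y`. -/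
theorem IsCompact.exists_norm_eq_one_inner_lt {B : Set E} (hB : IsCompact B)
    (hBc : Convex ℝ B) (hne : B.Nonempty) {y : E} (hy : y ∉ B) :
    ∃ u : E, ‖u‖ = 1 ∧ ∀ c ∈ B, inner ℝ u c < inner ℝ u y := by
  obtain ⟨p, hp, hmin⟩ := exists_norm_eq_iInf_of_complete_convex hne hB.isComplete hBc y
  have hobtuse := (norm_eq_iInf_iff_real_inner_le_zero hBc hp).1 hmin
  have hv : y - p ≠ 0 := sub_ne_zero.2 fun h => hy (h ▸ hp)
  refine ⟨‖y - p‖⁻¹ • (y - p), norm_smul_inv_norm hv, fun c hc => ?_⟩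
  have hcp := hobtuse c hc
  have hpos := real_inner_self_pos.2 hv
  rw [inner_sub_right] at hcp hpos
  rw [real_inner_smul_left, real_inner_smul_left]
  gcongr
  linarith

theorem closedBall_subset_of_forall_infDist_le {B : Set E} (hB : IsCompact B)
    (hBc : Convex ℝ B) (hne : B.Nonempty) {x : E} {t δ : ℝ} (hδ : 0 ≤ δ)
    (h : ∀ z ∈ closedBall x t, infDist z B ≤ δ) : closedBall x (t - δ) ⊆ B := by
  intro y hy
  by_contra hyB
  rw [mem_closedBall] at hy
  obtain ⟨u, hu, hsep⟩ := hB.exists_norm_eq_one_inner_lt hBc hne hyB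
  have ht : 0 ≤ t := by linarith [dist_nonneg (x := y) (y := x)]
  set w := x + t • u
  have hw : w ∈ closedBall x t := by
    simp [w, norm_smul, hu, abs_of_nonneg ht]
  obtain ⟨c, hc, hwc⟩ := hB.exists_infDist_eq_dist hne w
  have hyx : inner ℝ u (y - x) ≤ t - δ := by
    calc inner ℝ u (y - x) ≤ ‖u‖ * ‖y - x‖ := real_inner_le_norm _ _
      _ ≤ t - δ := by rwa [hu, one_mul, ← dist_eq_norm]
  have hwc_le : inner ℝ u (w - c) ≤ δ := by
    calc inner ℝ u (w - c) ≤ ‖u‖ * ‖w - c‖ := real_inner_le_norm _ _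
      _ ≤ δ := by rw [hu, one_mul, ← dist_eq_norm, ← hwc]; exact h w hw
  have hwc_eq : inner ℝ u (w - c) = t - inner ℝ u (y - x) + (inner ℝ u y - inner ℝ u c) := by
    simp only [w, inner_sub_right, inner_add_right, real_inner_smul_right,
      real_inner_self_eq_norm_sq, hu]
    ring
  linarith [hsep c hc]

variable {A B : Set E} {δ : ℝ}

theorem infDist_compl_le_of_mem_frontier (hB : IsCompact B) (hBc : Convex ℝ B) (hδ : 0 ≤ δ)
    (hAB : ∀ z ∈ A, infDist z B ≤ δ) {x : E} (hx : x ∈ frontier B) : infDist x Aᶜ ≤ δ := by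
  refine le_of_forall_gt_imp_ge_of_dense fun t ht => ?_
  by_cases hball : closedBall x t ⊆ A
  · have hne : B.Nonempty := ⟨x, hB.isClosed.frontier_subset hx⟩
    have hsub : closedBall x (t - δ) ⊆ B :=
      closedBall_subset_of_forall_infDist_le hB hBc hne hδ fun z hz => hAB z (hball hz)
    exact absurd (mem_interior_iff_mem_nhds.2
      (Filter.mem_of_superset (closedBall_mem_nhds x (by linarith)) hsub)) hx.2
  · obtain ⟨y, hy, hyA⟩ := not_subset.1 hball
    exact (infDist_le_dist_of_mem hyA).trans (mem_closedBall'.1 hy)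

theorem infDist_frontier_le_of_mem_frontier (hB : IsCompact B) (hBc : Convex ℝ B)
    (hδ : 0 ≤ δ) (hAB : ∀ z ∈ A, infDist z B ≤ δ) (hBA : ∀ z ∈ B, infDist z A ≤ δ)
    {x : E} (hx : x ∈ frontier B) : infDist x (frontier A) ≤ δ := by
  by_cases hxA : x ∈ A
  · exact (infDist_frontier_le_infDist_compl hxA).trans
      (infDist_compl_le_of_mem_frontier hB hBc hδ hAB hx)
  · have := infDist_frontier_le_infDist_compl (s := Aᶜ) hxA
    rw [frontier_compl, compl_compl] at this
    exact this.trans (hBA x (hB.isClosed.frontier_subset hx))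

theorem hausdorffDist_frontier_le (hA : IsCompact A) (hAc : Convex ℝ A) (hB : IsCompact B)
    (hBc : Convex ℝ B) : hausdorffDist (frontier A) (frontier B) ≤ hausdorffDist A B := by
  rcases A.eq_empty_or_nonempty with rfl | hAne
  · simp
  rcases B.eq_empty_or_nonempty with rfl | hBne
  · simp
  have hfin := hausdorffEDist_ne_top_of_nonempty_of_bounded hAne hBne hA.isBounded hB.isBounded
  have hAB : ∀ z ∈ A, infDist z B ≤ hausdorffDist A B := fun z hz =>
    infDist_le_hausdorffDist_of_mem hz hfin
  have hBA : ∀ z ∈ B, infDist z A ≤ hausdorffDist A B := fun z hz => by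
    rw [hausdorffDist_comm]
    exact infDist_le_hausdorffDist_of_mem hz (by rwa [hausdorffEDist_comm])
  exact hausdorffDist_le_of_infDist hausdorffDist_nonneg
    (fun x hx => infDist_frontier_le_of_mem_frontier hA hAc hausdorffDist_nonneg hBA hAB hx)
    (fun x hx => infDist_frontier_le_of_mem_frontier hB hBc hausdorffDist_nonneg hAB hBA hx)

end InnerProductSpace

theorem frontier_tendsto_of_hausdorff_tendsto_general {n : ℕ}
    {C : ℕ → Set (EuclideanSpace ℝ (Fin n))} {D : Set (EuclideanSpace ℝ (Fin n))}
    (hCcpt : ∀ i, IsCompact (C i)) (hCconv : ∀ i, Convex ℝ (C i))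
    (hDcpt : IsCompact D) (hDconv : Convex ℝ D)
    (hconv : Filter.Tendsto (fun i => Metric.hausdorffDist (C i) D)
      Filter.atTop (nhds 0)) :
    Filter.Tendsto (fun i => Metric.hausdorffDist (frontier (C i)) (frontier D))
      Filter.atTop (nhds 0) :=
  squeeze_zero (fun _ => hausdorffDist_nonneg)
    (fun i => hausdorffDist_frontier_le (hCcpt i) (hCconv i) hDcpt hDconv) hconv

/-- If compact convex bodies `Cᵢ` (with nonempty interior) converge in Hausdorff
distance to a compact convex body `C` with nonempty interior, then their boundaries
`∂Cᵢ` converge in Hausdorff distance to `∂C`. -/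
theorem frontier_tendsto_of_hausdorff_tendsto {n : ℕ}
    {C : ℕ → Set (EuclideanSpace ℝ (Fin n))} {D : Set (EuclideanSpace ℝ (Fin n))}
    (hCcpt : ∀ i, IsCompact (C i)) (hCconv : ∀ i, Convex ℝ (C i))
    (hCint : ∀ i, (interior (C i)).Nonempty)
    (hDcpt : IsCompact D) (hDconv : Convex ℝ D) (hDint : (interior D).Nonempty)
    (hconv : Filter.Tendsto (fun i => Metric.hausdorffDist (C i) D)
      Filter.atTop (nhds 0)) :
    Filter.Tendsto (fun i => Metric.hausdorffDist (frontier (C i)) (frontier D))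
      Filter.atTop (nhds 0) :=
  frontier_tendsto_of_hausdorff_tendsto_general hCcpt hCconv hDcpt hDconv hconv
end
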